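/- arXiv:2209.12963 — 3 statements merged into one kernel-verified Lean document; each statement's English description precedes it below -/
import Mathlib

section
/- (Validity of subset row inequalities for integer solutions.) Let S be a finite set (the customer subset N_δ of the SRI), m a positive natural number, L a finite set (of routes), x : L → ℕ (the number of times each route is selected), and a : S × L → ℕ (the number of times route l covers customer u). If Σ_{l ∈ L} x_l · a(u, l) ≤ 1 for every u ∈ S, then Σ_{l ∈ L} x_l · ⌊(Σ_{u ∈ S} a(u, l)) / m⌋ ≤ ⌊|S| / m⌋. -/
open Finset

theorem Nat.sum_div_le_sum_div {ι : Type*} (s : Finset ι) (f : ι → ℕ) (m : ℕ) :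
    ∑ i ∈ s, f i / m ≤ (∑ i ∈ s, f i) / m := by
  classical
  induction s using Finset.induction_on with
  | empty => simp
  | insert i s hi ih =>
    rw [sum_insert hi, sum_insert hi]
    exact (add_le_add_right ih _).trans Nat.div_add_div_le_add_div

theorem Finset.sum_mul_sum_le_card_of_sum_mul_le_one {σ ρ R : Type*} [CommSemiring R]
    [PartialOrder R] [IsOrderedAddMonoid R] (S : Finset σ) (L : Finset ρ) (x : ρ → R)
    (a : σ → ρ → R) (hcov : ∀ u ∈ S, ∑ l ∈ L, x l * a u l ≤ 1) :
    ∑ l ∈ L, x l * ∑ u ∈ S, a u l ≤ #S :=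
  calc ∑ l ∈ L, x l * ∑ u ∈ S, a u l = ∑ u ∈ S, ∑ l ∈ L, x l * a u l := by
        simp_rw [mul_sum]; exact sum_comm
    _ ≤ ∑ _u ∈ S, 1 := sum_le_sum hcov
    _ = #S := by simp

theorem sri_valid_general {σ ρ : Type*} (S : Finset σ) (L : Finset ρ) (m : ℕ)
    (x : ρ → ℕ) (a : σ → ρ → ℕ)
    (hcov : ∀ u ∈ S, ∑ l ∈ L, x l * a u l ≤ 1) :
    ∑ l ∈ L, x l * ((∑ u ∈ S, a u l) / m) ≤ S.card / m :=
  calc ∑ l ∈ L, x l * ((∑ u ∈ S, a u l) / m)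
      ≤ ∑ l ∈ L, x l * (∑ u ∈ S, a u l) / m :=
        sum_le_sum fun _ _ => Nat.mul_div_le_mul_div_assoc _ _ _
    _ ≤ (∑ l ∈ L, x l * ∑ u ∈ S, a u l) / m := Nat.sum_div_le_sum_div _ _ _
    _ ≤ S.card / m := Nat.div_le_div_right (sum_mul_sum_le_card_of_sum_mul_le_one S L x a hcov)

/-- Validity of subset row inequalities for integer solutions: if each customer `u ∈ S`
is covered at most once by the selected routes, then
`∑ l ∈ L, x l * (∑ u ∈ S, a u l) / m ≤ |S| / m` (natural-number division). -/
theorem sri_valid {σ ρ : Type*} (S : Finset σ) (L : Finset ρ) (m : ℕ) (hm : 0 < m)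
    (x : ρ → ℕ) (a : σ → ρ → ℕ)
    (hcov : ∀ u ∈ S, ∑ l ∈ L, x l * a u l ≤ 1) :
    ∑ l ∈ L, x l * ((∑ u ∈ S, a u l) / m) ≤ S.card / m :=
  sri_valid_general S L m x a hcov
end

section
/- (Validity of LA-subset-row inequalities for integer solutions.) Let S be a finite set (the customer subset N_δ of the SRI), m a positive natural number, L a finite set (of routes), x : L → ℕ (the number of times each route is selected), and a : S × L → ℕ (the number of times route l covers customer u) with Σ_{l ∈ L} x_l · a(u, l) ≤ 1 for every u ∈ S. Suppose further that each l ∈ L is equipped with a finite set P_l (the LA-arcs of route l) and counts b_l : P_l → ℕ (the number of customers of S covered by each arc) satisfying Σ_{p ∈ P_l} b_l(p) ≤ Σ_{u ∈ S} a(u, l). Then Σ_{l ∈ L} x_l · Σ_{p ∈ P_l} ⌊b_l(p) / m⌋ ≤ ⌊|S| / m⌋. -/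
/-!
Rounding down is superadditive, so the left-hand side is at most
`⌊∑ l, x l * ∑ p, b l p / m⌋ ≤ ⌊∑ l, x l * ∑ u, a u l / m⌋`, and exchanging the order of
summation shows that `∑ l, x l * ∑ u, a u l = ∑ u, ∑ l, x l * a u l ≤ |S|` because every
customer of `S` is covered at most once.
-/

open Finset

theorem Finset.sum_mul_sum_le_card_of_forall_sum_le_one {σ ρ : Type*} (S : Finset σ)
    (L : Finset ρ) (x : ρ → ℕ) (a : σ → ρ → ℕ) (hcov : ∀ u ∈ S, ∑ l ∈ L, x l * a u l ≤ 1) :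
    ∑ l ∈ L, x l * ∑ u ∈ S, a u l ≤ S.card :=
  calc ∑ l ∈ L, x l * ∑ u ∈ S, a u l
      = ∑ u ∈ S, ∑ l ∈ L, x l * a u l := by simp_rw [mul_sum]; exact sum_comm
    _ ≤ ∑ _u ∈ S, 1 := sum_le_sum hcov
    _ = S.card := (card_eq_sum_ones S).symm

theorem lasri_valid_general {σ ρ π : Type*} (S : Finset σ) (L : Finset ρ) (m : ℕ)
    (x : ρ → ℕ) (a : σ → ρ → ℕ)
    (hcov : ∀ u ∈ S, ∑ l ∈ L, x l * a u l ≤ 1)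
    (P : ρ → Finset π) (b : ρ → π → ℕ)
    (hb : ∀ l ∈ L, ∑ p ∈ P l, b l p ≤ ∑ u ∈ S, a u l) :
    ∑ l ∈ L, x l * ∑ p ∈ P l, (b l p / m) ≤ S.card / m :=
  calc ∑ l ∈ L, x l * ∑ p ∈ P l, (b l p / m)
      ≤ ∑ l ∈ L, x l * ((∑ p ∈ P l, b l p) / m) := by
        gcongr with l; exact Nat.sum_div_le_sum_div _ _ _
    _ ≤ ∑ l ∈ L, (x l * ∑ p ∈ P l, b l p) / m :=
        sum_le_sum fun l _ => Nat.mul_div_le_mul_div_assoc _ _ _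
    _ ≤ (∑ l ∈ L, x l * ∑ p ∈ P l, b l p) / m := Nat.sum_div_le_sum_div _ _ _
    _ ≤ (∑ l ∈ L, x l * ∑ u ∈ S, a u l) / m :=
        Nat.div_le_div_right (sum_le_sum fun l hl => Nat.mul_le_mul_left _ (hb l hl))
    _ ≤ S.card / m :=
        Nat.div_le_div_right (sum_mul_sum_le_card_of_forall_sum_le_one S L x a hcov)

/-- Validity of LA-subset-row inequalities for integer solutions: if each customer `u ∈ S`
is covered at most once by the selected routes, and for each route `l` the total count of
`S`-customers covered by its LA-arcs is at most the total coverage of `S` by `l`, then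
`∑ l ∈ L, x l * ∑ p ∈ P l, (b l p / m) ≤ |S| / m` (natural-number division). -/
theorem lasri_valid {σ ρ π : Type*} (S : Finset σ) (L : Finset ρ) (m : ℕ) (hm : 0 < m)
    (x : ρ → ℕ) (a : σ → ρ → ℕ)
    (hcov : ∀ u ∈ S, ∑ l ∈ L, x l * a u l ≤ 1)
    (P : ρ → Finset π) (b : ρ → π → ℕ)
    (hb : ∀ l ∈ L, ∑ p ∈ P l, b l p ≤ ∑ u ∈ S, a u l) :
    ∑ l ∈ L, x l * ∑ p ∈ P l, (b l p / m) ≤ S.card / m :=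
  lasri_valid_general S L m x a hcov P b hb
end

section
/- (Existence of a positive-flow source-to-sink path in a DAG.) Let V be a finite type, s, t ∈ V distinct, and f : V → V → ℝ with f(i, j) ≥ 0 for all i, j. Suppose the positive-support relation i → j defined by f(i, j) > 0 admits no directed cycle (i.e., there is no nonempty sequence of positive-support steps returning to its starting vertex). Suppose flow conservation holds at every vertex other than s and t: Σ_{j} f(j, i) = Σ_{j} f(i, j) for all i ∉ {s, t}; that s has no inflow: Σ_j f(j, s) = 0; and that s has positive outflow: Σ_{j} f(s, j) > 0. Then there exists a finite sequence of vertices s = v_0, v_1, …, v_k = t with f(v_{i−1}, v_i) > 0 for every i = 1, …, k. -/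
/-!
Let `u → w` mean `0 < f u w`. Every vertex `u ≠ t` reachable from `s` has an out-edge: for
`u = s` this is the positive outflow, and otherwise `u` receives flow from its predecessor, so
`u ≠ s` (no inflow at `s`) and conservation forces positive outflow. Following out-edges from `s`
without meeting `t` would give an infinite walk, which on a finite vertex set closes a cycle.
Formally, the transitive closure of `←` is well founded, and well-founded induction shows that `t`
is reachable from every vertex reachable from `s`.
-/

open Finset Relation

namespace Relation

variable {α : Type*} {r : α → α → Prop}

theorem exists_seq_cons {a b c : α} (hac : r a c)
    (h : ∃ (k : ℕ) (v : ℕ → α), v 0 = c ∧ v k = b ∧ ∀ i < k, r (v i) (v (i + 1))) :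
    ∃ (k : ℕ) (v : ℕ → α), 0 < k ∧ v 0 = a ∧ v k = b ∧ ∀ i < k, r (v i) (v (i + 1)) := by
  obtain ⟨k, v, hv0, hvk, hstep⟩ := h
  refine ⟨k + 1, fun | 0 => a | i + 1 => v i, k.succ_pos, rfl, hvk, ?_⟩
  rintro (_ | i) hi
  · show r a (v 0)
    exact hv0 ▸ hac
  · exact hstep i (by omega)

theorem ReflTransGen.exists_seq {a b : α} (h : ReflTransGen r a b) :
    ∃ (k : ℕ) (v : ℕ → α), v 0 = a ∧ v k = b ∧ ∀ i < k, r (v i) (v (i + 1)) := by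
  induction h using ReflTransGen.head_induction_on with
  | refl => exact ⟨0, fun _ => b, rfl, rfl, by omega⟩
  | head hac _ ih =>
    obtain ⟨k, v, -, hv⟩ := exists_seq_cons hac ih
    exact ⟨k, v, hv⟩

theorem TransGen.exists_seq {a b : α} (h : TransGen r a b) :
    ∃ (k : ℕ) (v : ℕ → α), 0 < k ∧ v 0 = a ∧ v k = b ∧ ∀ i < k, r (v i) (v (i + 1)) :=
  let ⟨_, hac, hcb⟩ := TransGen.head'_iff.mp h
  exists_seq_cons hac hcb.exists_seq

theorem wellFounded_flip_transGen [Finite α] (hacyc : ∀ x, ¬TransGen r x x) :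
    WellFounded (flip (TransGen r)) :=
  haveI : IsTrans α (flip (TransGen r)) := ⟨fun _ _ _ hab hbc => hbc.trans hab⟩
  haveI : Std.Irrefl (flip (TransGen r)) := ⟨hacyc⟩
  Finite.wellFounded_of_trans_of_irrefl _

theorem reflTransGen_of_forall_exists_step [Finite α] (hacyc : ∀ x, ¬TransGen r x x)
    {s t : α} (hstep : ∀ u, ReflTransGen r s u → u ≠ t → ∃ w, r u w) :
    ReflTransGen r s t := by
  suffices ∀ u, ReflTransGen r s u → ReflTransGen r u t from this s .refl
  intro u
  induction u using (wellFounded_flip_transGen hacyc).induction with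
  | _ u ih =>
    intro hsu
    by_cases hut : u = t
    · exact hut ▸ .refl
    obtain ⟨w, huw⟩ := hstep u hsu hut
    exact .head huw (ih w (.single huw) (hsu.tail huw))

end Relation

theorem exists_pos_of_sum_pos {ι M : Type*} [AddCommMonoid M] [LinearOrder M]
    [IsOrderedAddMonoid M] {s : Finset ι} {g : ι → M}
    (h : 0 < ∑ i ∈ s, g i) : ∃ i ∈ s, 0 < g i := by
  contrapose! h
  exact sum_nonpos h

theorem exists_pos_out_of_reachable {V : Type*} [Fintype V] {s t : V} {f : V → V → ℝ}
    (hf : ∀ i j, 0 ≤ f i j) (hcons : ∀ i, i ≠ s → i ≠ t → ∑ j, f j i = ∑ j, f i j)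
    (hsin : ∑ j, f j s = 0) (hsout : 0 < ∑ j, f s j) {u : V}
    (hsu : ReflTransGen (fun i j => 0 < f i j) s u) (hut : u ≠ t) : ∃ w, 0 < f u w := by
  suffices hout : 0 < ∑ j, f u j by simpa using exists_pos_of_sum_pos hout
  rcases hsu.cases_tail with rfl | ⟨p, -, hpu⟩
  · exact hsout
  have hin : 0 < ∑ j, f j u := hpu.trans_le (single_le_sum (fun j _ => hf j u) (mem_univ p))
  have hus : u ≠ s := by
    rintro rfl
    exact hin.ne' hsin
  exact hcons u hus hut ▸ hin

theorem flow_decomposition_path_general {V : Type*} [Fintype V] (s t : V)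
    (f : V → V → ℝ) (hf : ∀ i j, 0 ≤ f i j)
    (hacyc : ¬∃ (k : ℕ) (v : ℕ → V), 0 < k ∧ v 0 = v k ∧
      ∀ i < k, 0 < f (v i) (v (i + 1)))
    (hcons : ∀ i, i ≠ s → i ≠ t → ∑ j, f j i = ∑ j, f i j)
    (hsin : ∑ j, f j s = 0)
    (hsout : 0 < ∑ j, f s j) :
    ∃ (k : ℕ) (v : ℕ → V), v 0 = s ∧ v k = t ∧ ∀ i < k, 0 < f (v i) (v (i + 1)) := by
  have hnocycle : ∀ x, ¬TransGen (fun i j => 0 < f i j) x x := by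
    intro x hx
    obtain ⟨k, v, hk, hv0, hvk, hstep⟩ := hx.exists_seq
    exact hacyc ⟨k, v, hk, hv0.trans hvk.symm, hstep⟩
  exact (reflTransGen_of_forall_exists_step hnocycle fun _ hsu hut =>
    exists_pos_out_of_reachable hf hcons hsin hsout hsu hut).exists_seq

/-- Existence of a positive-flow source-to-sink path in a DAG: if the nonnegative flow
`f` has acyclic positive support, satisfies flow conservation away from `s` and `t`,
`s` has no inflow and positive outflow, then there is a path from `s` to `t` all of
whose steps carry positive flow. -/
theorem flow_decomposition_path {V : Type*} [Fintype V] (s t : V) (hst : s ≠ t)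
    (f : V → V → ℝ) (hf : ∀ i j, 0 ≤ f i j)
    (hacyc : ¬∃ (k : ℕ) (v : ℕ → V), 0 < k ∧ v 0 = v k ∧
      ∀ i < k, 0 < f (v i) (v (i + 1)))
    (hcons : ∀ i, i ≠ s → i ≠ t → ∑ j, f j i = ∑ j, f i j)
    (hsin : ∑ j, f j s = 0)
    (hsout : 0 < ∑ j, f s j) :
    ∃ (k : ℕ) (v : ℕ → V), v 0 = s ∧ v k = t ∧ ∀ i < k, 0 < f (v i) (v (i + 1)) :=
  flow_decomposition_path_general s t f hf hacyc hcons hsin hsout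
end
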